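/- arXiv:2008.08990 — 4 statements merged into one kernel-verified Lean document; each statement's English description precedes it below -/
import Mathlib

section
/- Let X be a nonnegative random variable with survival function F̄(x) = P(X > x) such that ∫₀^∞ F̄(x)² dx < ∞. Then for every integer m ≥ 1, ∏_{i=1}^m ∫₀^∞ F̄(x)^{2i} dx ≤ (∫₀^∞ F̄(x)² dx)^m; equivalently, -(1/2)∏_{i=1}^m ∫₀^∞ F̄(x)^{2i} dx ≥ -(1/2)(∫₀^∞ F̄(x)² dx)^m, i.e. the CREX of an m-sample MinRSSU design is at least the CREX of an m-sample SRS design. -/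
/-! Since `0 ≤ F̄ ≤ 1`, the powers `F̄^(2i)` decrease in `i`, so each factor `∫ F̄^(2i)` of
the MinRSSU product is at most the SRS factor `∫ F̄²`. -/

open MeasureTheory Finset

section PowerIntegrals

variable {α : Type*} [MeasurableSpace α] {μ : Measure α} {g : α → ℝ}

theorem integral_pow_le_integral_of_mem_Icc (hg : Integrable g μ)
    (hg01 : ∀ᵐ x ∂μ, g x ∈ Set.Icc 0 1) {n : ℕ} (hn : n ≠ 0) :
    ∫ x, g x ^ n ∂μ ≤ ∫ x, g x ∂μ := by
  have hpow_le : ∀ᵐ x ∂μ, g x ^ n ≤ g x := hg01.mono fun x hx => pow_le_of_le_one hx.1 hx.2 hn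
  have hpow_int : Integrable (fun x => g x ^ n) μ := by
    refine hg.mono' (hg.aestronglyMeasurable.pow n) ?_
    filter_upwards [hg01, hpow_le] with x hx hle
    rwa [Real.norm_eq_abs, abs_of_nonneg (pow_nonneg hx.1 n)]
  exact integral_mono_ae hpow_int hg hpow_le

theorem prod_integral_pow_le_pow_integral (hg : Integrable g μ)
    (hg01 : ∀ᵐ x ∂μ, g x ∈ Set.Icc 0 1) (m : ℕ) :
    ∏ i ∈ Icc 1 m, ∫ x, g x ^ i ∂μ ≤ (∫ x, g x ∂μ) ^ m := by
  calc ∏ i ∈ Icc 1 m, ∫ x, g x ^ i ∂μ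
      ≤ ∏ _i ∈ Icc 1 m, ∫ x, g x ∂μ := by
        refine prod_le_prod (fun i _ => integral_nonneg_of_ae ?_) fun i hi => ?_
        · exact hg01.mono fun x hx => pow_nonneg hx.1 i
        · exact integral_pow_le_integral_of_mem_Icc hg hg01
            (Nat.one_le_iff_ne_zero.mp (mem_Icc.mp hi).1)
    _ = (∫ x, g x ∂μ) ^ m := by rw [prod_const, Nat.card_Icc, Nat.add_sub_cancel]

end PowerIntegrals

theorem crex_minrssu_le_srs_general
    {Ω : Type*} [MeasurableSpace Ω] (μ : Measure Ω) [IsProbabilityMeasure μ]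
    (X : Ω → ℝ)
    (Fbar : ℝ → ℝ) (hFbar : ∀ x, Fbar x = (μ {ω | x < X ω}).toReal)
    (hint : IntegrableOn (fun x => Fbar x ^ 2) (Set.Ioi 0) volume)
    (m : ℕ) :
    (∏ i ∈ Finset.Icc 1 m, ∫ x in Set.Ioi (0 : ℝ), Fbar x ^ (2 * i)) ≤
      (∫ x in Set.Ioi (0 : ℝ), Fbar x ^ 2) ^ m ∧
    -(1 / 2) * ∏ i ∈ Finset.Icc 1 m, ∫ x in Set.Ioi (0 : ℝ), Fbar x ^ (2 * i) ≥
      -(1 / 2) * (∫ x in Set.Ioi (0 : ℝ), Fbar x ^ 2) ^ m := by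
  have hsq01 : ∀ x, Fbar x ^ 2 ∈ Set.Icc 0 1 := fun x => by
    have hF : Fbar x ∈ Set.Icc 0 1 := by
      rw [hFbar x]
      exact ⟨measureReal_nonneg, measureReal_le_one⟩
    exact ⟨sq_nonneg _, pow_le_one₀ hF.1 hF.2⟩
  have hprod : (∏ i ∈ Icc 1 m, ∫ x in Set.Ioi (0 : ℝ), Fbar x ^ (2 * i)) ≤
      (∫ x in Set.Ioi (0 : ℝ), Fbar x ^ 2) ^ m := by
    simpa only [pow_mul] using
      prod_integral_pow_le_pow_integral hint (ae_of_all _ hsq01) m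
  exact ⟨hprod, by linarith⟩

/-- For a nonnegative random variable `X` with survival function `F̄` such that
`∫₀^∞ F̄(x)² dx < ∞`, for every `m ≥ 1` one has
`∏_{i=1}^m ∫₀^∞ F̄(x)^(2i) dx ≤ (∫₀^∞ F̄(x)² dx)^m`, equivalently the CREX of the
`m`-sample MinRSSU design is at least the CREX of the `m`-sample SRS design. -/
theorem crex_minrssu_le_srs
    {Ω : Type*} [MeasurableSpace Ω] (μ : Measure Ω) [IsProbabilityMeasure μ]
    (X : Ω → ℝ) (hX : Measurable X) (hXpos : ∀ ω, 0 ≤ X ω)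
    (Fbar : ℝ → ℝ) (hFbar : ∀ x, Fbar x = (μ {ω | x < X ω}).toReal)
    (hint : IntegrableOn (fun x => Fbar x ^ 2) (Set.Ioi 0) volume)
    (m : ℕ) (hm : 1 ≤ m) :
    (∏ i ∈ Finset.Icc 1 m, ∫ x in Set.Ioi (0 : ℝ), Fbar x ^ (2 * i)) ≤
      (∫ x in Set.Ioi (0 : ℝ), Fbar x ^ 2) ^ m ∧
    -(1 / 2) * ∏ i ∈ Finset.Icc 1 m, ∫ x in Set.Ioi (0 : ℝ), Fbar x ^ (2 * i) ≥
      -(1 / 2) * (∫ x in Set.Ioi (0 : ℝ), Fbar x ^ 2) ^ m :=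
  crex_minrssu_le_srs_general μ X Fbar hFbar hint m
end

section
/- Let X and Y be nonnegative random variables with quantile functions Q_X(u) = inf{x : P(X ≤ x) ≥ u} and Q_Y(u) = inf{x : P(Y ≤ x) ≥ u}. Assume X is smaller than Y in the dispersive order, i.e. Q_X(v) - Q_X(u) ≤ Q_Y(v) - Q_Y(u) for all 0 < u < v < 1, that the essential infima of X and Y are both 0 (inf_{u∈(0,1)} Q_X(u) = inf_{u∈(0,1)} Q_Y(u) = 0), and that ∫₀^∞ P(Y > x)² dx < ∞. Then for every integer m ≥ 1, ∏_{i=1}^m ∫₀^∞ P(X > x)^{2i} dx ≤ ∏_{i=1}^m ∫₀^∞ P(Y > x)^{2i} dx; equivalently ξJ(X^{(m)}_MinRSSU) ≥ ξJ(Y^{(m)}_MinRSSU). -/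
open MeasureTheory Finset

/-!
The quantiles of `Y` are nonnegative, so for `w < u` the dispersive inequality gives
`Q_X u - Q_Y u ≤ Q_X w - Q_Y w ≤ Q_X w`; since `Q_X` is monotone and `inf Q_X = 0`, this forces
`Q_X ≤ Q_Y` on `(0, 1)`. Through the Galois connection `Q u ≤ x ↔ u ≤ F x` this becomes
`F_Y ≤ F_X`, i.e. `P(X > x) ≤ P(Y > x)`, and the products compare factor by factor, every power
`2i ≥ 2` of a survival function being dominated by the integrable `P(Y > x)²`.
-/

open Filter Topology ProbabilityTheory

theorem StieltjesFunction.csInf_setOf_le_le_iff (F : StieltjesFunction ℝ) {u : ℝ}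
    (hne : {x | u ≤ F x}.Nonempty) (hbdd : BddBelow {x | u ≤ F x}) (x : ℝ) :
    sInf {x | u ≤ F x} ≤ x ↔ u ≤ F x := by
  refine ⟨fun hx => ?_, fun hx => csInf_le hbdd hx⟩
  set a := sInf {x | u ≤ F x}
  have hright : ∀ y, a < y → u ≤ F y := fun y hy => by
    obtain ⟨z, hz, hzy⟩ := exists_lt_of_csInf_lt hne hy
    exact hz.trans (F.mono hzy.le)
  have ha : u ≤ F a := ge_of_tendsto
    ((F.right_continuous a).mono Set.Ioi_subset_Ici_self).tendsto
    (eventually_nhdsWithin_of_forall hright)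
  exact ha.trans (F.mono hx)

namespace ProbabilityTheory

/-- Meaningful only for `u ∈ (0, 1)`: otherwise the set is empty or unbounded below and `sInf`
returns the junk value `0`. -/
noncomputable def quantile (μ : Measure ℝ) (u : ℝ) : ℝ :=
  sInf {x | u ≤ cdf μ x}

variable {μ ν : Measure ℝ}

lemma quantile_le_iff {u : ℝ} (hu : u ∈ Set.Ioo 0 1) (x : ℝ) :
    quantile μ u ≤ x ↔ u ≤ cdf μ x := by
  refine (cdf μ).csInf_setOf_le_le_iff ?_ ?_ x
  · exact ((tendsto_cdf_atTop μ).eventually (eventually_ge_nhds hu.2)).exists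
  · obtain ⟨a, ha⟩ :=
      eventually_atBot.1 ((tendsto_cdf_atBot μ).eventually (eventually_lt_nhds hu.1))
    exact ⟨a, fun y hy => le_of_not_gt fun hya => (ha y hya.le).not_ge hy⟩

lemma le_cdf_quantile {u : ℝ} (hu : u ∈ Set.Ioo 0 1) : u ≤ cdf μ (quantile μ u) :=
  (quantile_le_iff hu _).1 le_rfl

lemma monotoneOn_quantile : MonotoneOn (quantile μ) (Set.Ioo 0 1) := fun _ hu _ hv huv =>
  (quantile_le_iff hu _).2 (huv.trans (le_cdf_quantile hv))

lemma quantile_nonneg [IsProbabilityMeasure μ] (hμ : μ (Set.Iio 0) = 0) {u : ℝ}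
    (hu : u ∈ Set.Ioo 0 1) : 0 ≤ quantile μ u := by
  by_contra! hneg
  have hzero : cdf μ (quantile μ u) = 0 := by
    rw [cdf_eq_real, measureReal_def, measure_mono_null (Set.Iic_subset_Iio.2 hneg) hμ,
      ENNReal.toReal_zero]
  linarith [le_cdf_quantile (μ := μ) hu, hu.1]

lemma cdf_le_cdf_of_quantile_le (h : ∀ u ∈ Set.Ioo 0 1, quantile μ u ≤ quantile ν u) (x : ℝ) :
    cdf ν x ≤ cdf μ x := by
  refine le_of_forall_lt_imp_le_of_dense fun c hc => ?_
  rcases le_or_gt c 0 with hc0 | hc0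
  · exact hc0.trans (cdf_nonneg μ x)
  · have hc1 : c ∈ Set.Ioo 0 1 := ⟨hc0, hc.trans_le (cdf_le_one ν x)⟩
    exact (quantile_le_iff hc1 x).1 ((h c hc1).trans ((quantile_le_iff hc1 x).2 hc.le))

lemma measureReal_Ioi_eq_one_sub_cdf [IsProbabilityMeasure μ] (x : ℝ) :
    μ.real (Set.Ioi x) = 1 - cdf μ x := by
  rw [← Set.compl_Iic, probReal_compl_eq_one_sub measurableSet_Iic, cdf_eq_real]

section RandomVariable

variable {Ω : Type*} [MeasurableSpace Ω] {P : Measure Ω} {X : Ω → ℝ}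

lemma cdf_map_eq_toReal [IsProbabilityMeasure P] (hX : Measurable X) (x : ℝ) :
    cdf (P.map X) x = (P {ω | X ω ≤ x}).toReal := by
  have := Measure.isProbabilityMeasure_map (μ := P) hX.aemeasurable
  rw [cdf_eq_real, map_measureReal_apply hX measurableSet_Iic]
  rfl

lemma toReal_measure_lt_eq_one_sub_cdf_map [IsProbabilityMeasure P] (hX : Measurable X) (x : ℝ) :
    (P {ω | x < X ω}).toReal = 1 - cdf (P.map X) x := by
  have := Measure.isProbabilityMeasure_map (μ := P) hX.aemeasurable
  rw [← measureReal_Ioi_eq_one_sub_cdf, map_measureReal_apply hX measurableSet_Ioi]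
  rfl

lemma map_Iio_zero_eq_zero (hX : Measurable X) (hX0 : ∀ ω, 0 ≤ X ω) :
    P.map X (Set.Iio 0) = 0 := by
  rw [Measure.map_apply hX measurableSet_Iio]
  convert measure_empty (μ := P)
  exact Set.eq_empty_of_forall_notMem fun ω hω => (hX0 ω).not_gt hω

end RandomVariable

end ProbabilityTheory

lemma le_of_sub_le_sub_of_sInf_image_eq_zero {α : Type*} [LinearOrder α] {s : Set α}
    {f g : α → ℝ} (hf : MonotoneOn f s) (hg : ∀ u ∈ s, 0 ≤ g u)
    (hfg : ∀ u ∈ s, ∀ v ∈ s, u < v → f v - f u ≤ g v - g u)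
    (hinf : sInf (f '' s) = 0) {u : α} (hu : u ∈ s) : f u ≤ g u := by
  by_contra! hlt
  obtain ⟨_, ⟨w, hw, rfl⟩, hfw⟩ :=
    exists_lt_of_csInf_lt ((Set.nonempty_of_mem hu).image f) (hinf ▸ sub_pos.2 hlt)
  rcases lt_or_ge w u with hwu | huw
  · linarith [hfg w hw u hu hwu, hg w hw]
  · linarith [hf hu hw huw, hg u hu]

section PowerIntegrals

variable {α : Type*} [MeasurableSpace α] {μ : Measure α} {s : Set α} {f g : α → ℝ} {k : ℕ}

lemma integrableOn_pow_of_le_of_sq (hfm : Measurable f) (hf0 : ∀ x, 0 ≤ f x)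
    (hfg : ∀ x, f x ≤ g x) (hg1 : ∀ x, g x ≤ 1) (hg2 : IntegrableOn (fun x => g x ^ 2) s μ)
    (hk : 2 ≤ k) : IntegrableOn (fun x => f x ^ k) s μ := by
  refine Integrable.mono hg2 (hfm.pow_const k).aestronglyMeasurable
    (Eventually.of_forall fun x => ?_)
  rw [Real.norm_of_nonneg (pow_nonneg (hf0 x) k), Real.norm_of_nonneg (sq_nonneg (g x))]
  calc f x ^ k ≤ f x ^ 2 := pow_le_pow_of_le_one (hf0 x) ((hfg x).trans (hg1 x)) hk
    _ ≤ g x ^ 2 := pow_le_pow_left₀ (hf0 x) (hfg x) 2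

lemma setIntegral_pow_mono (hfm : Measurable f) (hgm : Measurable g) (hs : MeasurableSet s)
    (hf0 : ∀ x, 0 ≤ f x) (hfg : ∀ x, f x ≤ g x) (hg1 : ∀ x, g x ≤ 1)
    (hg2 : IntegrableOn (fun x => g x ^ 2) s μ) (hk : 2 ≤ k) :
    ∫ x in s, f x ^ k ∂μ ≤ ∫ x in s, g x ^ k ∂μ :=
  setIntegral_mono_on (integrableOn_pow_of_le_of_sq hfm hf0 hfg hg1 hg2 hk)
    (integrableOn_pow_of_le_of_sq hgm (fun x => (hf0 x).trans (hfg x)) (fun _ => le_rfl) hg1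
      hg2 hk) hs fun x _ => pow_le_pow_left₀ (hf0 x) (hfg x) k

end PowerIntegrals

theorem crex_minrssu_dispersive_order_general
    {Ω₁ Ω₂ : Type*} [MeasurableSpace Ω₁] [MeasurableSpace Ω₂]
    (μ : Measure Ω₁) (ν : Measure Ω₂)
    [IsProbabilityMeasure μ] [IsProbabilityMeasure ν]
    (X : Ω₁ → ℝ) (Y : Ω₂ → ℝ) (hX : Measurable X) (hY : Measurable Y)
    (hYpos : ∀ ω, 0 ≤ Y ω)
    (QX QY : ℝ → ℝ)
    (hQX : ∀ u, QX u = sInf {x : ℝ | u ≤ (μ {ω | X ω ≤ x}).toReal})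
    (hQY : ∀ u, QY u = sInf {x : ℝ | u ≤ (ν {ω | Y ω ≤ x}).toReal})
    (hdisp : ∀ u v : ℝ, 0 < u → u < v → v < 1 → QX v - QX u ≤ QY v - QY u)
    (hinfX : sInf (QX '' Set.Ioo 0 1) = 0)
    (hint : IntegrableOn (fun x => ((ν {ω | x < Y ω}).toReal) ^ 2) (Set.Ioi 0) volume)
    (m : ℕ) :
    (∏ i ∈ Finset.Icc 1 m, ∫ x in Set.Ioi (0 : ℝ), ((μ {ω | x < X ω}).toReal) ^ (2 * i)) ≤
      ∏ i ∈ Finset.Icc 1 m, ∫ x in Set.Ioi (0 : ℝ), ((ν {ω | x < Y ω}).toReal) ^ (2 * i) := by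
  have := Measure.isProbabilityMeasure_map (μ := ν) hY.aemeasurable
  obtain rfl : QX = quantile (μ.map X) := funext fun u => by
    simp only [hQX, quantile, cdf_map_eq_toReal hX]
  obtain rfl : QY = quantile (ν.map Y) := funext fun u => by
    simp only [hQY, quantile, cdf_map_eq_toReal hY]
  have hquantile : ∀ u ∈ Set.Ioo 0 1, quantile (μ.map X) u ≤ quantile (ν.map Y) u :=
    fun u hu => le_of_sub_le_sub_of_sInf_image_eq_zero monotoneOn_quantile
      (fun _ hv => quantile_nonneg (map_Iio_zero_eq_zero hY hYpos) hv)
      (fun v hv w hw hvw => hdisp v w hv.1 hvw hw.2) hinfX hu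
  have hsurvival (x : ℝ) : 1 - cdf (μ.map X) x ≤ 1 - cdf (ν.map Y) x :=
    sub_le_sub_left (cdf_le_cdf_of_quantile_le hquantile x) 1
  simp only [toReal_measure_lt_eq_one_sub_cdf_map hX, toReal_measure_lt_eq_one_sub_cdf_map hY]
    at hint ⊢
  refine prod_le_prod (fun _ _ => setIntegral_nonneg measurableSet_Ioi fun x _ =>
    pow_nonneg (sub_nonneg.2 (cdf_le_one _ x)) _) (fun i hi => ?_)
  exact setIntegral_pow_mono ((monotone_cdf _).measurable.const_sub 1)
    ((monotone_cdf _).measurable.const_sub 1) measurableSet_Ioi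
    (fun x => sub_nonneg.2 (cdf_le_one _ x)) hsurvival
    (fun x => sub_le_self 1 (cdf_nonneg _ x)) hint (by linarith [(mem_Icc.1 hi).1])

/-- If `X ≤_disp Y` (dispersive order of the quantile functions), both
essential infima equal `0`, and `∫₀^∞ P(Y > x)² dx < ∞`, then for every `m ≥ 1`,
`∏_{i=1}^m ∫₀^∞ P(X > x)^{2i} dx ≤ ∏_{i=1}^m ∫₀^∞ P(Y > x)^{2i} dx`, i.e.
`ξJ(X^{(m)}_MinRSSU) ≥ ξJ(Y^{(m)}_MinRSSU)`. -/
theorem crex_minrssu_dispersive_order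
    {Ω₁ Ω₂ : Type*} [MeasurableSpace Ω₁] [MeasurableSpace Ω₂]
    (μ : Measure Ω₁) (ν : Measure Ω₂)
    [IsProbabilityMeasure μ] [IsProbabilityMeasure ν]
    (X : Ω₁ → ℝ) (Y : Ω₂ → ℝ) (hX : Measurable X) (hY : Measurable Y)
    (hXpos : ∀ ω, 0 ≤ X ω) (hYpos : ∀ ω, 0 ≤ Y ω)
    (QX QY : ℝ → ℝ)
    (hQX : ∀ u, QX u = sInf {x : ℝ | u ≤ (μ {ω | X ω ≤ x}).toReal})
    (hQY : ∀ u, QY u = sInf {x : ℝ | u ≤ (ν {ω | Y ω ≤ x}).toReal})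
    (hdisp : ∀ u v : ℝ, 0 < u → u < v → v < 1 → QX v - QX u ≤ QY v - QY u)
    (hinfX : sInf (QX '' Set.Ioo 0 1) = 0)
    (hinfY : sInf (QY '' Set.Ioo 0 1) = 0)
    (hint : IntegrableOn (fun x => ((ν {ω | x < Y ω}).toReal) ^ 2) (Set.Ioi 0) volume)
    (m : ℕ) (hm : 1 ≤ m) :
    (∏ i ∈ Finset.Icc 1 m, ∫ x in Set.Ioi (0 : ℝ), ((μ {ω | x < X ω}).toReal) ^ (2 * i)) ≤
      ∏ i ∈ Finset.Icc 1 m, ∫ x in Set.Ioi (0 : ℝ), ((ν {ω | x < Y ω}).toReal) ^ (2 * i) :=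
  crex_minrssu_dispersive_order_general μ ν X Y hX hY hYpos QX QY hQX hQY hdisp hinfX hint m
end

section
/- Let X be a nonnegative random variable with ∫₀^∞ P(φ(X) > x)² dx < ∞, and let φ : [0,∞) → [0,∞) be a differentiable function with φ'(x) ≥ 1 for all x ≥ 0. Then φ(x) ≥ x for all x ≥ 0, hence P(X > t) ≤ P(φ(X) > t) for all t ≥ 0, and consequently for every integer m ≥ 1, ∏_{i=1}^m ∫₀^∞ P(X > x)^{2i} dx ≤ ∏_{i=1}^m ∫₀^∞ P(φ(X) > x)^{2i} dx; equivalently ξJ(X^{(m)}_MinRSSU) ≥ ξJ(φ(X)^{(m)}_MinRSSU). -/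
open MeasureTheory Finset

/-! Since `(φ x - x)' = φ' - 1 ≥ 0` and `φ 0 ≥ 0`, the mean value theorem gives `x ≤ φ x` on
`[0, ∞)`. As `X ≥ 0`, this yields `X ≤ φ ∘ X` pointwise, so every survival function, and every power
of it, of `X` lies below that of `φ(X)`. These powers are nonnegative and bounded by `1`, so
integrability of the square of the survival function of `φ(X)` dominates all higher powers; the
integrals then compare termwise and so do their products. -/

theorem self_le_of_one_le_deriv {φ : ℝ → ℝ} (hcont : ContinuousOn φ (Set.Ici 0))
    (hdiff : DifferentiableOn ℝ φ (Set.Ioi 0)) (hderiv : ∀ x ∈ Set.Ioi 0, 1 ≤ deriv φ x)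
    (h0 : 0 ≤ φ 0) {x : ℝ} (hx : 0 ≤ x) : x ≤ φ x := by
  have hmvt := (convex_Ici (0 : ℝ)).mul_sub_le_image_sub_of_le_deriv hcont
    (by rwa [interior_Ici]) (by rwa [interior_Ici])
    0 Set.self_mem_Ici x hx hx
  linarith

theorem measure_lt_le_measure_lt_of_le {Ω : Type*} [MeasurableSpace Ω] (μ : Measure Ω)
    {X Y : Ω → ℝ} (hXY : ∀ ω, X ω ≤ Y ω) (t : ℝ) :
    μ {ω | t < X ω} ≤ μ {ω | t < Y ω} :=
  measure_mono fun _ hω => lt_of_lt_of_le hω (hXY _)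

theorem Integrable.pow_of_norm_le_one {α : Type*} [MeasurableSpace α] {μ : Measure α}
    {g : α → ℝ} {k n : ℕ} (hk : Integrable (fun x => g x ^ k) μ)
    (hg : AEStronglyMeasurable g μ) (hg1 : ∀ x, ‖g x‖ ≤ 1) (hkn : k ≤ n) :
    Integrable (fun x => g x ^ n) μ :=
  hk.mono (hg.pow n) <| Filter.Eventually.of_forall fun x => by
    simpa only [norm_pow] using pow_le_pow_of_le_one (norm_nonneg _) (hg1 x) hkn

noncomputable def survivalFun {Ω : Type*} [MeasurableSpace Ω] (μ : Measure Ω) (Y : Ω → ℝ)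
    (x : ℝ) : ℝ :=
  (μ {ω | x < Y ω}).toReal

section survivalFun

variable {Ω : Type*} [MeasurableSpace Ω] (μ : Measure Ω)

theorem survivalFun_nonneg (Y : Ω → ℝ) (x : ℝ) : 0 ≤ survivalFun μ Y x :=
  ENNReal.toReal_nonneg

theorem survivalFun_le_one [IsProbabilityMeasure μ] (Y : Ω → ℝ) (x : ℝ) :
    survivalFun μ Y x ≤ 1 :=
  ENNReal.toReal_le_of_le_ofReal zero_le_one (by simpa using prob_le_one)

theorem survivalFun_antitone [IsFiniteMeasure μ] (Y : Ω → ℝ) : Antitone (survivalFun μ Y) :=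
  fun _ _ hab => ENNReal.toReal_mono (measure_ne_top μ _)
    (measure_mono fun _ hω => lt_of_le_of_lt hab hω)

theorem survivalFun_mono [IsFiniteMeasure μ] {X Y : Ω → ℝ} (hXY : ∀ ω, X ω ≤ Y ω) (x : ℝ) :
    survivalFun μ X x ≤ survivalFun μ Y x :=
  ENNReal.toReal_mono (measure_ne_top μ _) (measure_lt_le_measure_lt_of_le μ hXY x)

theorem setIntegral_survivalFun_pow_le [IsProbabilityMeasure μ] {X Y : Ω → ℝ}
    (hXY : ∀ ω, X ω ≤ Y ω) {s : Set ℝ} {k n : ℕ}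
    (hk : IntegrableOn (fun x => survivalFun μ Y x ^ k) s) (hkn : k ≤ n) :
    ∫ x in s, survivalFun μ X x ^ n ≤ ∫ x in s, survivalFun μ Y x ^ n := by
  have hYn : IntegrableOn (fun x => survivalFun μ Y x ^ n) s :=
    Integrable.pow_of_norm_le_one hk
      (survivalFun_antitone μ Y).measurable.aestronglyMeasurable
      (fun x => by
        rw [Real.norm_of_nonneg (survivalFun_nonneg μ Y x)]
        exact survivalFun_le_one μ Y x)
      hkn
  exact integral_mono_of_nonneg
    (Filter.Eventually.of_forall fun x => pow_nonneg (survivalFun_nonneg μ X x) n) hYn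
    (Filter.Eventually.of_forall fun x =>
      pow_le_pow_left₀ (survivalFun_nonneg μ X x) (survivalFun_mono μ hXY x) n)

end survivalFun

theorem crex_minrssu_transform_general
    {Ω : Type*} [MeasurableSpace Ω] (μ : Measure Ω) [IsProbabilityMeasure μ]
    (X : Ω → ℝ) (hXpos : ∀ ω, 0 ≤ X ω)
    (φ : ℝ → ℝ) (hdiff : Differentiable ℝ φ)
    (hderiv : ∀ x, 0 ≤ x → 1 ≤ deriv φ x)
    (hmaps : ∀ x, 0 ≤ x → 0 ≤ φ x)
    (hint : IntegrableOn (fun x => ((μ {ω | x < φ (X ω)}).toReal) ^ 2)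
      (Set.Ioi 0) volume) :
    (∀ x : ℝ, 0 ≤ x → x ≤ φ x) ∧
    (∀ t : ℝ, 0 ≤ t → μ {ω | t < X ω} ≤ μ {ω | t < φ (X ω)}) ∧
    (∀ m : ℕ, 1 ≤ m →
      (∏ i ∈ Finset.Icc 1 m,
          ∫ x in Set.Ioi (0 : ℝ), ((μ {ω | x < X ω}).toReal) ^ (2 * i)) ≤
        ∏ i ∈ Finset.Icc 1 m,
          ∫ x in Set.Ioi (0 : ℝ), ((μ {ω | x < φ (X ω)}).toReal) ^ (2 * i)) := by
  have hself : ∀ x : ℝ, 0 ≤ x → x ≤ φ x := fun x hx =>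
    self_le_of_one_le_deriv hdiff.continuous.continuousOn hdiff.differentiableOn
      (fun y hy => hderiv y (le_of_lt hy)) (hmaps 0 le_rfl) hx
  have hXφ : ∀ ω, X ω ≤ φ (X ω) := fun ω => hself _ (hXpos ω)
  refine ⟨hself, fun t _ => measure_lt_le_measure_lt_of_le μ hXφ t, fun m _ => ?_⟩
  refine prod_le_prod (fun i _ => setIntegral_nonneg measurableSet_Ioi fun x _ =>
    pow_nonneg (survivalFun_nonneg μ X x) _) fun i hi => ?_
  exact setIntegral_survivalFun_pow_le μ hXφ hint (by grind)

/-- For a nonnegative random variable `X` and a differentiable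
`φ : [0,∞) → [0,∞)` with `φ' ≥ 1`, one has `φ(x) ≥ x` on `[0,∞)`, hence
`P(X > t) ≤ P(φ(X) > t)` for `t ≥ 0`, and consequently for every `m ≥ 1`,
`∏_{i=1}^m ∫₀^∞ P(X > x)^{2i} dx ≤ ∏_{i=1}^m ∫₀^∞ P(φ(X) > x)^{2i} dx`, i.e.
`ξJ(X^{(m)}_MinRSSU) ≥ ξJ(φ(X)^{(m)}_MinRSSU)`. -/
theorem crex_minrssu_transform
    {Ω : Type*} [MeasurableSpace Ω] (μ : Measure Ω) [IsProbabilityMeasure μ]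
    (X : Ω → ℝ) (hX : Measurable X) (hXpos : ∀ ω, 0 ≤ X ω)
    (φ : ℝ → ℝ) (hdiff : Differentiable ℝ φ)
    (hderiv : ∀ x, 0 ≤ x → 1 ≤ deriv φ x)
    (hmaps : ∀ x, 0 ≤ x → 0 ≤ φ x)
    (hint : IntegrableOn (fun x => ((μ {ω | x < φ (X ω)}).toReal) ^ 2)
      (Set.Ioi 0) volume) :
    (∀ x : ℝ, 0 ≤ x → x ≤ φ x) ∧
    (∀ t : ℝ, 0 ≤ t → μ {ω | t < X ω} ≤ μ {ω | t < φ (X ω)}) ∧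
    (∀ m : ℕ, 1 ≤ m →
      (∏ i ∈ Finset.Icc 1 m,
          ∫ x in Set.Ioi (0 : ℝ), ((μ {ω | x < X ω}).toReal) ^ (2 * i)) ≤
        ∏ i ∈ Finset.Icc 1 m,
          ∫ x in Set.Ioi (0 : ℝ), ((μ {ω | x < φ (X ω)}).toReal) ^ (2 * i)) :=
  crex_minrssu_transform_general μ X hXpos φ hdiff hderiv hmaps hint
end

section
/- Let X be a nonnegative random variable with continuous cdf F whose support is contained in [0, 2μ], and suppose X is symmetric about μ, i.e. F(μ - t) = 1 - F(μ + t) for all t ∈ ℝ. Then for every integer i ≥ 1, ∫₀^{2μ} (1 - F(x))^{2i} dx = ∫₀^{2μ} F(x)^{2i} dx, and consequently ξJ(X^{(m)}_MinRSSU) = -(1/2)∏_{i=1}^m ∫₀^{2μ} (1-F(x))^{2i} dx equals the cumulative extropy analogue CJ(X^{(m)}_MinRSSU) = -(1/2)∏_{i=1}^m ∫₀^{2μ} F(x)^{2i} dx. -/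
open MeasureTheory Finset

/-! Symmetry about `μ` says `1 - F x = F (2μ - x)`, and the reflection `x ↦ 2μ - x` maps
`[0, 2μ]` onto itself, so it carries every integral of a function of `1 - F` over `[0, 2μ]`
to the same integral of that function of `F`. -/

theorem one_sub_apply_reflect_of_symm {F : ℝ → ℝ} {μ : ℝ}
    (hsym : ∀ t : ℝ, F (μ - t) = 1 - F (μ + t)) (x : ℝ) :
    1 - F (2 * μ - x) = F x := by
  have h := hsym (μ - x)
  rw [sub_sub_cancel, show μ + (μ - x) = 2 * μ - x by ring] at h
  linarith

theorem integral_comp_one_sub_eq_of_symm {F : ℝ → ℝ} {μ : ℝ}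
    (hsym : ∀ t : ℝ, F (μ - t) = 1 - F (μ + t)) (g : ℝ → ℝ) :
    ∫ x in (0 : ℝ)..(2 * μ), g (1 - F x) = ∫ x in (0 : ℝ)..(2 * μ), g (F x) := by
  calc ∫ x in (0 : ℝ)..(2 * μ), g (1 - F x)
      = ∫ x in (0 : ℝ)..(2 * μ), g (1 - F (2 * μ - x)) := by
        rw [intervalIntegral.integral_comp_sub_left (fun x => g (1 - F x)), sub_zero, sub_self]
    _ = ∫ x in (0 : ℝ)..(2 * μ), g (F x) := by
        simp only [one_sub_apply_reflect_of_symm hsym]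

theorem crex_eq_cex_of_symmetric_general
    (μ : ℝ)
    (F : ℝ → ℝ)
    (hsym : ∀ t : ℝ, F (μ - t) = 1 - F (μ + t)) :
    (∀ i : ℕ, 1 ≤ i →
      (∫ x in (0 : ℝ)..(2 * μ), (1 - F x) ^ (2 * i)) =
        ∫ x in (0 : ℝ)..(2 * μ), F x ^ (2 * i)) ∧
    (∀ m : ℕ, 1 ≤ m →
      -(1 / 2) * ∏ i ∈ Finset.Icc 1 m, ∫ x in (0 : ℝ)..(2 * μ), (1 - F x) ^ (2 * i) =
        -(1 / 2) * ∏ i ∈ Finset.Icc 1 m, ∫ x in (0 : ℝ)..(2 * μ), F x ^ (2 * i)) := by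
  have hpow (i : ℕ) := integral_comp_one_sub_eq_of_symm hsym (· ^ (2 * i))
  exact ⟨fun i _ => hpow i, fun m _ => by simp only [hpow]⟩

/-- If `X` is a nonnegative random variable with continuous cdf `F`,
support contained in `[0, 2μ]`, and symmetric about `μ` (`F(μ-t) = 1 - F(μ+t)`), then
for every `i ≥ 1`, `∫₀^{2μ} (1-F(x))^{2i} dx = ∫₀^{2μ} F(x)^{2i} dx`, and consequently
`ξJ(X^{(m)}_MinRSSU) = CJ(X^{(m)}_MinRSSU)`. -/
theorem crex_eq_cex_of_symmetric
    {Ω : Type*} [MeasurableSpace Ω] (P : Measure Ω) [IsProbabilityMeasure P]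
    (X : Ω → ℝ) (hX : Measurable X) (μ : ℝ) (hμ : 0 ≤ μ)
    (hsupp : ∀ ω, X ω ∈ Set.Icc 0 (2 * μ))
    (F : ℝ → ℝ) (hF : ∀ x, F x = (P {ω | X ω ≤ x}).toReal)
    (hcont : Continuous F)
    (hsym : ∀ t : ℝ, F (μ - t) = 1 - F (μ + t)) :
    (∀ i : ℕ, 1 ≤ i →
      (∫ x in (0 : ℝ)..(2 * μ), (1 - F x) ^ (2 * i)) =
        ∫ x in (0 : ℝ)..(2 * μ), F x ^ (2 * i)) ∧
    (∀ m : ℕ, 1 ≤ m →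
      -(1 / 2) * ∏ i ∈ Finset.Icc 1 m, ∫ x in (0 : ℝ)..(2 * μ), (1 - F x) ^ (2 * i) =
        -(1 / 2) * ∏ i ∈ Finset.Icc 1 m, ∫ x in (0 : ℝ)..(2 * μ), F x ^ (2 * i)) :=
  crex_eq_cex_of_symmetric_general μ F hsym
end
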